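/- (Green's theorem for the parabolic operator, on a rectangle.) Let k be a nonzero complex number, let x₁ < x₂ and y₁ < y₂ be real, and let v, w : ℝ² → ℂ be twice continuously differentiable on an open set containing the rectangle [x₁,x₂]×[y₁,y₂]. Then ∫_{x₁}^{x₂} ∫_{y₁}^{y₂} ( L[v](x,y)·w(x,y) − L'[w](x,y)·v(x,y) ) dy dx = ∫_{y₁}^{y₂} ( v(x₂,y)w(x₂,y) − v(x₁,y)w(x₁,y) ) dy + (2ik)^{-1} ∫_{x₁}^{x₂} ( (w ∂_y v − v ∂_y w)(x,y₂) − (w ∂_y v − v ∂_y w)(x,y₁) ) dx. -/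

import Mathlib

open MeasureTheory

/-- Partial derivative in the first (`x`) variable. -/
noncomputable def pdx (f : ℝ → ℝ → ℂ) (x y : ℝ) : ℂ :=
  deriv (fun t : ℝ => f t y) x

/-- Partial derivative in the second (`y`) variable. -/
noncomputable def pdy (f : ℝ → ℝ → ℂ) (x y : ℝ) : ℂ :=
  deriv (fun s : ℝ => f x s) y

/-- Second partial derivative in the second (`y`) variable. -/
noncomputable def pdyy (f : ℝ → ℝ → ℂ) (x y : ℝ) : ℂ :=
  deriv (fun s : ℝ => pdy f x s) y

/-- The parabolic operator `L[u] = ∂ₓu + (2ik)⁻¹ ∂ᵧ²u`. -/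
noncomputable def Lpar (k : ℂ) (f : ℝ → ℝ → ℂ) (x y : ℝ) : ℂ :=
  pdx f x y + (2 * Complex.I * k)⁻¹ * pdyy f x y

/-- The formal adjoint parabolic operator `L'[w] = -∂ₓw + (2ik)⁻¹ ∂ᵧ²w`. -/
noncomputable def Lpar' (k : ℂ) (f : ℝ → ℝ → ℂ) (x y : ℝ) : ℂ :=
  -pdx f x y + (2 * Complex.I * k)⁻¹ * pdyy f x y

/-!
The integrand is a divergence: by the product rule,
`L[v] w - L'[w] v = ∂ₓ(v w) + (2ik)⁻¹ ∂ᵧ(w ∂ᵧv - v ∂ᵧw)`,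
so the identity is the divergence theorem on the rectangle for the field
`(v w, (2ik)⁻¹ (w ∂ᵧv - v ∂ᵧw))`, which is `C¹` because `v` and `w` are `C²`.
-/

open Set
open scoped Interval

theorem ContDiffOn.differentiableAt_of_isOpen {E F : Type*} [NormedAddCommGroup E]
    [NormedSpace ℝ E] [NormedAddCommGroup F] [NormedSpace ℝ F] {n : WithTop ℕ∞} {f : E → F}
    {U : Set E} {p : E} (hf : ContDiffOn ℝ n f U) (hU : IsOpen U) (hp : p ∈ U) (hn : n ≠ 0) :
    DifferentiableAt ℝ f p :=
  (hf.contDiffAt (hU.mem_nhds hp)).differentiableAt hn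

section PartialDerivatives

variable {f : ℝ → ℝ → ℂ} {x y : ℝ}

theorem fderiv_apply_one_zero_eq_pdx
    (hf : DifferentiableAt ℝ (fun p : ℝ × ℝ => f p.1 p.2) (x, y)) :
    fderiv ℝ (fun p : ℝ × ℝ => f p.1 p.2) (x, y) (1, 0) = pdx f x y :=
  (hf.hasFDerivAt.comp_hasDerivAt x ((hasDerivAt_id x).prodMk (hasDerivAt_const x y))).deriv.symm

theorem fderiv_apply_zero_one_eq_pdy
    (hf : DifferentiableAt ℝ (fun p : ℝ × ℝ => f p.1 p.2) (x, y)) :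
    fderiv ℝ (fun p : ℝ × ℝ => f p.1 p.2) (x, y) (0, 1) = pdy f x y :=
  (hf.hasFDerivAt.comp_hasDerivAt y ((hasDerivAt_const y x).prodMk (hasDerivAt_id y))).deriv.symm

theorem hasDerivAt_pdx (hf : DifferentiableAt ℝ (fun p : ℝ × ℝ => f p.1 p.2) (x, y)) :
    HasDerivAt (fun t => f t y) (pdx f x y) x :=
  (hf.comp (f := fun t : ℝ => (t, y)) x (by fun_prop)).hasDerivAt

theorem hasDerivAt_pdy (hf : DifferentiableAt ℝ (fun p : ℝ × ℝ => f p.1 p.2) (x, y)) :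
    HasDerivAt (fun s => f x s) (pdy f x y) y :=
  (hf.comp (f := fun s : ℝ => (x, s)) y (by fun_prop)).hasDerivAt

theorem contDiffOn_pdy {U : Set (ℝ × ℝ)} (hU : IsOpen U) {m n : WithTop ℕ∞}
    (hf : ContDiffOn ℝ n (fun p : ℝ × ℝ => f p.1 p.2) U) (hmn : m + 1 ≤ n) :
    ContDiffOn ℝ m (fun p : ℝ × ℝ => pdy f p.1 p.2) U := by
  refine ((hf.fderiv_of_isOpen hU hmn).clm_apply
    (contDiffOn_const (c := ((0 : ℝ), (1 : ℝ))))).congr fun p hp => ?_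
  have hf1 : ContDiffOn ℝ 1 (fun p : ℝ × ℝ => f p.1 p.2) U := hf.of_le (le_add_self.trans hmn)
  exact (fderiv_apply_zero_one_eq_pdy (hf1.differentiableAt_of_isOpen hU hp one_ne_zero)).symm

end PartialDerivatives

open intervalIntegral in
theorem integral_integral_pdx_add_pdy {f g : ℝ → ℝ → ℂ}
    {x₁ x₂ y₁ y₂ : ℝ} (hx : x₁ ≤ x₂) (hy : y₁ ≤ y₂) {U : Set (ℝ × ℝ)} (hU : IsOpen U)
    (hUrect : Icc x₁ x₂ ×ˢ Icc y₁ y₂ ⊆ U)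
    (hf : ContDiffOn ℝ 1 (fun p : ℝ × ℝ => f p.1 p.2) U)
    (hg : ContDiffOn ℝ 1 (fun p : ℝ × ℝ => g p.1 p.2) U) :
    (∫ x in x₁..x₂, ∫ y in y₁..y₂, (pdx f x y + pdy g x y))
      = (∫ y in y₁..y₂, (f x₂ y - f x₁ y)) + ∫ x in x₁..x₂, (g x y₂ - g x y₁) := by
  set F : ℝ × ℝ → ℂ := fun p => f p.1 p.2
  set G : ℝ × ℝ → ℂ := fun p => g p.1 p.2
  have hrect : [[x₁, x₂]] ×ˢ [[y₁, y₂]] ⊆ U := by rwa [uIcc_of_le hx, uIcc_of_le hy]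
  have hinterior : Ioo (min x₁ x₂) (max x₁ x₂) ×ˢ Ioo (min y₁ y₂) (max y₁ y₂) ⊆ U := by
    rw [min_eq_left hx, max_eq_right hx, min_eq_left hy, max_eq_right hy]
    exact (prod_mono Ioo_subset_Icc_self Ioo_subset_Icc_self).trans hUrect
  have hFd : ∀ p ∈ U, DifferentiableAt ℝ F p := fun p hp =>
    hf.differentiableAt_of_isOpen hU hp one_ne_zero
  have hGd : ∀ p ∈ U, DifferentiableAt ℝ G p := fun p hp =>
    hg.differentiableAt_of_isOpen hU hp one_ne_zero
  have hdiv_cont : ContinuousOn (fun p => fderiv ℝ F p (1, 0) + fderiv ℝ G p (0, 1)) U :=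
    ((hf.continuousOn_fderiv_of_isOpen hU le_rfl).clm_apply continuousOn_const).add
      ((hg.continuousOn_fderiv_of_isOpen hU le_rfl).clm_apply continuousOn_const)
  have hdiv := integral2_divergence_prod_of_hasFDerivAt F G (fderiv ℝ F) (fderiv ℝ G)
    x₁ y₁ x₂ y₂ (hf.continuousOn.mono hrect) (hg.continuousOn.mono hrect)
    (fun p hp => (hFd p (hinterior hp)).hasFDerivAt)
    (fun p hp => (hGd p (hinterior hp)).hasFDerivAt)
    ((hdiv_cont.mono hrect).integrableOn_compact (isCompact_uIcc.prod isCompact_uIcc))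
  have hslice_fst : ∀ y ∈ [[y₁, y₂]], IntervalIntegrable (fun x => g x y) volume x₁ x₂ :=
    fun y hy' => ((hg.continuousOn.mono hrect).comp
      (by fun_prop : Continuous fun x => (x, y)).continuousOn
      fun x hx' => mk_mem_prod hx' hy').intervalIntegrable
  have hslice_snd : ∀ x ∈ [[x₁, x₂]], IntervalIntegrable (fun y => f x y) volume y₁ y₂ :=
    fun x hx' => ((hf.continuousOn.mono hrect).comp
      (by fun_prop : Continuous fun y => (x, y)).continuousOn
      fun y hy' => mk_mem_prod hx' hy').intervalIntegrable
  calc (∫ x in x₁..x₂, ∫ y in y₁..y₂, (pdx f x y + pdy g x y))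
      = ∫ x in x₁..x₂, ∫ y in y₁..y₂, (fderiv ℝ F (x, y) (1, 0) + fderiv ℝ G (x, y) (0, 1)) :=
        integral_congr fun x hx' => integral_congr fun y hy' => by
          have hp : (x, y) ∈ U := hrect (mk_mem_prod hx' hy')
          rw [fderiv_apply_one_zero_eq_pdx (hFd _ hp), fderiv_apply_zero_one_eq_pdy (hGd _ hp)]
    _ = _ := hdiv
    _ = (∫ y in y₁..y₂, (f x₂ y - f x₁ y)) + ∫ x in x₁..x₂, (g x y₂ - g x y₁) := by
        rw [integral_sub (hslice_snd _ right_mem_uIcc) (hslice_snd _ left_mem_uIcc),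
          integral_sub (hslice_fst _ right_mem_uIcc) (hslice_fst _ left_mem_uIcc)]
        abel

theorem Lpar_mul_sub_Lpar'_mul (k : ℂ) {v w : ℝ → ℝ → ℂ} {x y : ℝ}
    (hv : DifferentiableAt ℝ (fun p : ℝ × ℝ => v p.1 p.2) (x, y))
    (hw : DifferentiableAt ℝ (fun p : ℝ × ℝ => w p.1 p.2) (x, y))
    (hv' : DifferentiableAt ℝ (fun p : ℝ × ℝ => pdy v p.1 p.2) (x, y))
    (hw' : DifferentiableAt ℝ (fun p : ℝ × ℝ => pdy w p.1 p.2) (x, y)) :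
    Lpar k v x y * w x y - Lpar' k w x y * v x y
      = pdx (fun x y => v x y * w x y) x y
        + pdy (fun x y => (2 * Complex.I * k)⁻¹ * (w x y * pdy v x y - v x y * pdy w x y)) x y := by
  have hx : HasDerivAt (fun t => v t y * w t y) _ x := (hasDerivAt_pdx hv).mul (hasDerivAt_pdx hw)
  have hy : HasDerivAt
      (fun s => (2 * Complex.I * k)⁻¹ * (w x s * pdy v x s - v x s * pdy w x s))
      ((2 * Complex.I * k)⁻¹ * (pdy w x y * pdy v x y + w x y * pdyy v x y
        - (pdy v x y * pdy w x y + v x y * pdyy w x y))) y :=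
    (((hasDerivAt_pdy hw).mul (hasDerivAt_pdy hv')).sub
      ((hasDerivAt_pdy hv).mul (hasDerivAt_pdy hw'))).const_mul _
  rw [pdx, hx.deriv, pdy, hy.deriv, Lpar, Lpar']
  ring

theorem parabolic_green_theorem_rectangle_general (k : ℂ)
    (x₁ x₂ y₁ y₂ : ℝ) (hx : x₁ < x₂) (hy : y₁ < y₂)
    (v w : ℝ → ℝ → ℂ) (U : Set (ℝ × ℝ)) (hU : IsOpen U)
    (hUrect : Set.Icc x₁ x₂ ×ˢ Set.Icc y₁ y₂ ⊆ U)
    (hv : ContDiffOn ℝ 2 (fun p : ℝ × ℝ => v p.1 p.2) U)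
    (hw : ContDiffOn ℝ 2 (fun p : ℝ × ℝ => w p.1 p.2) U) :
    (∫ x in x₁..x₂, ∫ y in y₁..y₂,
        (Lpar k v x y * w x y - Lpar' k w x y * v x y))
      = (∫ y in y₁..y₂, (v x₂ y * w x₂ y - v x₁ y * w x₁ y))
        + (2 * Complex.I * k)⁻¹ *
          ∫ x in x₁..x₂,
            ((w x y₂ * pdy v x y₂ - v x y₂ * pdy w x y₂)
              - (w x y₁ * pdy v x y₁ - v x y₁ * pdy w x y₁)) := by
  set c := (2 * Complex.I * k)⁻¹
  have hv1 : ContDiffOn ℝ 1 (fun p : ℝ × ℝ => v p.1 p.2) U := hv.of_le one_le_two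
  have hw1 : ContDiffOn ℝ 1 (fun p : ℝ × ℝ => w p.1 p.2) U := hw.of_le one_le_two
  have hpv : ContDiffOn ℝ 1 (fun p : ℝ × ℝ => pdy v p.1 p.2) U := contDiffOn_pdy hU hv le_rfl
  have hpw : ContDiffOn ℝ 1 (fun p : ℝ × ℝ => pdy w p.1 p.2) U := contDiffOn_pdy hU hw le_rfl
  rw [← intervalIntegral.integral_const_mul]
  calc _ = ∫ x in x₁..x₂, ∫ y in y₁..y₂, (pdx (fun x y => v x y * w x y) x y
        + pdy (fun x y => c * (w x y * pdy v x y - v x y * pdy w x y)) x y) := by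
        refine intervalIntegral.integral_congr fun x hx' => intervalIntegral.integral_congr
          fun y hy' => ?_
        rw [uIcc_of_le hx.le] at hx'
        rw [uIcc_of_le hy.le] at hy'
        have hp : (x, y) ∈ U := hUrect (mk_mem_prod hx' hy')
        exact Lpar_mul_sub_Lpar'_mul k (hv1.differentiableAt_of_isOpen hU hp one_ne_zero)
          (hw1.differentiableAt_of_isOpen hU hp one_ne_zero)
          (hpv.differentiableAt_of_isOpen hU hp one_ne_zero)
          (hpw.differentiableAt_of_isOpen hU hp one_ne_zero)
    _ = _ := integral_integral_pdx_add_pdy hx.le hy.le hU hUrect (hv1.mul hw1)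
        (contDiffOn_const.mul ((hw1.mul hpv).sub (hv1.mul hpw)))
    _ = _ := by simp only [mul_sub]

/-- Green's theorem for the parabolic operator on a rectangle: for `v, w` twice continuously
differentiable on an open set containing the rectangle `[x₁,x₂]×[y₁,y₂]`,
`∫∫ (L[v]·w − L'[w]·v) = ∫ (v w |_{x=x₂} − v w |_{x=x₁}) dy
  + (2ik)⁻¹ ∫ ((w ∂ᵧv − v ∂ᵧw)|_{y=y₂} − (w ∂ᵧv − v ∂ᵧw)|_{y=y₁}) dx`. -/
theorem parabolic_green_theorem_rectangle (k : ℂ) (hk : k ≠ 0)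
    (x₁ x₂ y₁ y₂ : ℝ) (hx : x₁ < x₂) (hy : y₁ < y₂)
    (v w : ℝ → ℝ → ℂ) (U : Set (ℝ × ℝ)) (hU : IsOpen U)
    (hUrect : Set.Icc x₁ x₂ ×ˢ Set.Icc y₁ y₂ ⊆ U)
    (hv : ContDiffOn ℝ 2 (fun p : ℝ × ℝ => v p.1 p.2) U)
    (hw : ContDiffOn ℝ 2 (fun p : ℝ × ℝ => w p.1 p.2) U) :
    (∫ x in x₁..x₂, ∫ y in y₁..y₂,
        (Lpar k v x y * w x y - Lpar' k w x y * v x y))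
      = (∫ y in y₁..y₂, (v x₂ y * w x₂ y - v x₁ y * w x₁ y))
        + (2 * Complex.I * k)⁻¹ *
          ∫ x in x₁..x₂,
            ((w x y₂ * pdy v x y₂ - v x y₂ * pdy w x y₂)
              - (w x y₁ * pdy v x y₁ - v x y₁ * pdy w x y₁)) :=
  parabolic_green_theorem_rectangle_general k x₁ x₂ y₁ y₂ hx hy v w U hU hUrect hv hw
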